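/- Let $\mu = \mathcal{U}(\mathbb{S}^1)$ be the uniform distribution on the unit circle in $\mathbb{R}^2$. Then the optimal denoiser for Gaussian noise of variance $\sigma^2$ is $D_{\mathrm{opt}}(u;\sigma) = g_\sigma(|u|)\frac{u}{|u|}$ for $u \ne 0$, where $g_\sigma(t) = \frac{I_1(t/\sigma^2)}{I_0(t/\sigma^2)}$ and $I_\alpha(z) = \frac{1}{\pi}\int_0^\pi \cos(\alpha\theta)\, e^{z\cos\theta}\, d\theta$ is the modified Bessel function of the first kind of order $\alpha$. -/

import Mathlib

open MeasureTheory Set Real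
open scoped NNReal ENNReal

/-- The optimal denoiser (posterior mean under Gaussian noise of variance `σ²`)
for a data distribution `p` on `ℝ²`. -/
noncomputable def Dopt (p : Measure (EuclideanSpace ℝ (Fin 2))) (σ : ℝ)
    (w : EuclideanSpace ℝ (Fin 2)) : EuclideanSpace ℝ (Fin 2) :=
  (∫ u, Real.exp (-‖u - w‖ ^ 2 / (2 * σ ^ 2)) ∂p)⁻¹ •
    ∫ u, Real.exp (-‖u - w‖ ^ 2 / (2 * σ ^ 2)) • u ∂p

/-- The uniform probability distribution on the unit circle `𝕊¹ ⊂ ℝ²`, as the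
law of `θ ↦ (cos θ, sin θ)` with `θ ~ U([0, 2π])`. -/
noncomputable def circleUniform : Measure (EuclideanSpace ℝ (Fin 2)) :=
  Measure.map (fun θ : ℝ => (WithLp.equiv 2 (Fin 2 → ℝ)).symm ![Real.cos θ, Real.sin θ])
    ((ENNReal.ofReal (2 * π))⁻¹ • volume.restrict (Icc (0 : ℝ) (2 * π)))

/-- The modified Bessel function of the first kind of order `α`:
`I_α(z) = (1/π) ∫₀^π cos(αθ) e^{z cos θ} dθ`. -/
noncomputable def besselI (α z : ℝ) : ℝ :=
  (1 / π) * ∫ θ in Icc (0 : ℝ) π, Real.cos (α * θ) * Real.exp (z * Real.cos θ)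



lemma besselI_interval (α z : ℝ) :
    besselI α z = (1 / π) * ∫ θ in (0:ℝ)..π, Real.cos (α * θ) * Real.exp (z * Real.cos θ) := by
  rw [besselI, MeasureTheory.integral_Icc_eq_integral_Ioc,
    intervalIntegral.integral_of_le Real.pi_nonneg]

lemma half_eq (f : ℝ → ℝ) (hf : Continuous f) (hsym : ∀ θ, f (2 * π - θ) = f θ) :
    ∫ θ in (0:ℝ)..(2 * π), f θ = 2 * ∫ θ in (0:ℝ)..π, f θ := by
  have h1 : ∫ θ in (0:ℝ)..(2 * π), f θ
      = (∫ θ in (0:ℝ)..π, f θ) + ∫ θ in π..(2 * π), f θ :=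
    (intervalIntegral.integral_add_adjacent_intervals
      (hf.intervalIntegrable _ _) (hf.intervalIntegrable _ _)).symm
  have h2 : ∫ θ in (0:ℝ)..π, f (2 * π - θ) = ∫ θ in π..(2 * π), f θ := by
    rw [intervalIntegral.integral_comp_sub_left f (2 * π)]
    norm_num [show 2*π-π = π by ring]
  simp only [hsym] at h2
  rw [h1, ← h2]; ring

lemma int_full_zero (z : ℝ) :
    ∫ θ in (0:ℝ)..(2 * π), Real.exp (z * Real.cos θ) = (2 * π) * besselI 0 z := by
  rw [half_eq _ (by fun_prop) (fun θ => by rw [Real.cos_two_pi_sub]),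
    besselI_interval]
  have : ∀ θ : ℝ, Real.cos (0 * θ) * Real.exp (z * Real.cos θ) = Real.exp (z * Real.cos θ) := by
    intro θ; simp
  simp only [this]
  field_simp

lemma int_full_one (z : ℝ) :
    ∫ θ in (0:ℝ)..(2 * π), Real.cos θ * Real.exp (z * Real.cos θ) = (2 * π) * besselI 1 z := by
  rw [half_eq _ (by fun_prop) (fun θ => by rw [Real.cos_two_pi_sub]),
    besselI_interval]
  simp only [one_mul]
  have hpi : π ≠ 0 := Real.pi_ne_zero
  rw [one_div, ← mul_assoc, mul_assoc 2 π, mul_inv_cancel₀ hpi, mul_one]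

lemma int_full_sin (z : ℝ) :
    ∫ θ in (0:ℝ)..(2 * π), Real.sin θ * Real.exp (z * Real.cos θ) = 0 := by
  have h := intervalIntegral.integral_comp_sub_left (a := 0) (b := 2 * π)
    (fun θ => Real.sin θ * Real.exp (z * Real.cos θ)) (2 * π)
  simp only [Real.sin_two_pi_sub, Real.cos_two_pi_sub, neg_mul, sub_self, sub_zero,
    intervalIntegral.integral_neg] at h
  linarith

lemma shift_integral (f : ℝ → ℝ) (hf : Function.Periodic f (2 * π)) (φ : ℝ) :
    ∫ θ in (0:ℝ)..(2 * π), f (θ - φ) = ∫ θ in (0:ℝ)..(2 * π), f θ := by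
  rw [intervalIntegral.integral_comp_sub_right f φ, zero_sub,
    show (2 * π - φ) = -φ + 2 * π by ring, hf.intervalIntegral_add_eq (-φ) 0, zero_add]

lemma besselI0_pos (z : ℝ) : 0 < besselI 0 z := by
  rw [besselI_interval]
  have hpos : (0:ℝ) < ∫ θ in (0:ℝ)..π, Real.cos (0 * θ) * Real.exp (z * Real.cos θ) := by
    apply intervalIntegral.intervalIntegral_pos_of_pos_on
    · exact (by fun_prop : Continuous fun θ : ℝ =>
        Real.cos (0 * θ) * Real.exp (z * Real.cos θ)).intervalIntegrable _ _
    · intro x _; simp [Real.exp_pos]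
    · exact Real.pi_pos
  positivity

noncomputable def cmap (θ : ℝ) : EuclideanSpace ℝ (Fin 2) :=
  (WithLp.equiv 2 (Fin 2 → ℝ)).symm ![Real.cos θ, Real.sin θ]

lemma circleUniform_eq : circleUniform =
    Measure.map cmap ((ENNReal.ofReal (2 * π))⁻¹ • volume.restrict (Icc (0 : ℝ) (2 * π))) := rfl

lemma cmap_cont : Continuous cmap := by
  apply (PiLp.continuous_toLp 2 (fun _ : Fin 2 => ℝ)).comp
  apply continuous_pi
  intro i
  fin_cases i <;> simp <;> fun_prop

lemma cmap_apply0 (θ : ℝ) : cmap θ 0 = Real.cos θ := by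
  rw [cmap]; rfl
lemma cmap_apply1 (θ : ℝ) : cmap θ 1 = Real.sin θ := by
  rw [cmap]; rfl


/-- The optimal denoiser for the uniform distribution on the
unit circle is radial: for `u ≠ 0`,
`D_opt(u;σ) = (I₁(|u|/σ²)/I₀(|u|/σ²)) · u/|u|`. -/
theorem circle_denoiser_bessel_formula (σ : ℝ) (hσ : 0 < σ) :
    ∀ u : EuclideanSpace ℝ (Fin 2), u ≠ 0 →
      Dopt circleUniform σ u =
        (besselI 1 (‖u‖ / σ ^ 2) / besselI 0 (‖u‖ / σ ^ 2)) • (‖u‖⁻¹ • u) := by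
  intro u hu
  have hσ2 : (0:ℝ) < σ ^ 2 := by positivity
  have hπ : (0:ℝ) < π := Real.pi_pos
  set r : ℝ := ‖u‖ with hr
  have hrpos : 0 < r := norm_pos_iff.mpr hu
  set z : ℝ := r / σ ^ 2 with hz
  have hr2 : r ^ 2 = u 0 ^ 2 + u 1 ^ 2 := by
    have h := EuclideanSpace.norm_eq u
    rw [hr, h, Real.sq_sqrt (by positivity)]
    simp [Fin.sum_univ_two, sq_abs]
  set w : ℂ := ⟨u 0, u 1⟩ with hw
  have hwne : w ≠ 0 := by
    intro h
    apply hu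
    have h0 : u 0 = 0 := congrArg Complex.re h
    have h1 : u 1 = 0 := congrArg Complex.im h
    ext i; fin_cases i <;> simpa
  have habs : ‖w‖ = r := by
    rw [Complex.norm_def, Complex.normSq_mk,
      show u 0 * u 0 + u 1 * u 1 = r ^ 2 by rw [hr2]; ring, Real.sqrt_sq hrpos.le]
  set φ : ℝ := Complex.arg w with hφ
  have hcos : r * Real.cos φ = u 0 := by
    rw [hφ, Complex.cos_arg hwne, habs]
    field_simp
    rfl
  have hsin : r * Real.sin φ = u 1 := by
    rw [hφ, Complex.sin_arg, habs]
    field_simp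
    rfl
  set C : ℝ := Real.exp (-(1 + r ^ 2) / (2 * σ ^ 2)) with hC
  have hCpos : 0 < C := Real.exp_pos _
  -- pointwise identity
  have hptw : ∀ θ : ℝ, Real.exp (-‖cmap θ - u‖ ^ 2 / (2 * σ ^ 2))
      = C * Real.exp (z * Real.cos (θ - φ)) := by
    intro θ
    have hn : ‖cmap θ - u‖ ^ 2 = 1 + r ^ 2 - 2 * (r * Real.cos (θ - φ)) := by
      have h1 : ‖cmap θ - u‖ ^ 2 = (Real.cos θ - u 0) ^ 2 + (Real.sin θ - u 1) ^ 2 := by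
        rw [EuclideanSpace.norm_eq, Real.sq_sqrt (by positivity)]
        simp [Fin.sum_univ_two, sq_abs, PiLp.sub_apply, cmap_apply0, cmap_apply1]
      rw [h1, Real.cos_sub]
      have hpyth := Real.sin_sq_add_cos_sq θ
      linear_combination hpyth - hr2 + 2 * Real.cos θ * hcos + 2 * Real.sin θ * hsin
    rw [hn, hC, ← Real.exp_add]
    congr 1
    rw [hz]
    field_simp
    ring
  -- periodicity facts
  have hper0 : Function.Periodic (fun ψ : ℝ => Real.exp (z * Real.cos ψ)) (2 * π) := by
    intro x; simp [Real.cos_add_two_pi]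
  have hperc : Function.Periodic (fun ψ : ℝ => Real.cos (ψ + φ) * Real.exp (z * Real.cos ψ)) (2 * π) := by
    intro x; simp [Real.cos_add_two_pi, show x + 2 * π + φ = x + φ + 2 * π by ring]
  have hpers : Function.Periodic (fun ψ : ℝ => Real.sin (ψ + φ) * Real.exp (z * Real.cos ψ)) (2 * π) := by
    intro x; simp [Real.cos_add_two_pi, Real.sin_add_two_pi, show x + 2 * π + φ = x + φ + 2 * π by ring]
  -- key scalar integrals
  have key_den : ∫ θ in (0:ℝ)..(2 * π), Real.exp (z * Real.cos (θ - φ)) = 2 * π * besselI 0 z := by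
    rw [shift_integral (fun ψ => Real.exp (z * Real.cos ψ)) hper0 φ, int_full_zero]
  have key_cos : ∫ θ in (0:ℝ)..(2 * π), Real.cos θ * Real.exp (z * Real.cos (θ - φ))
      = Real.cos φ * (2 * π * besselI 1 z) := by
    have hsh := shift_integral (fun ψ => Real.cos (ψ + φ) * Real.exp (z * Real.cos ψ)) hperc φ
    simp only [sub_add_cancel] at hsh
    rw [hsh]
    have hrw : ∀ θ : ℝ, Real.cos (θ + φ) * Real.exp (z * Real.cos θ)
        = Real.cos φ * (Real.cos θ * Real.exp (z * Real.cos θ))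
          - Real.sin φ * (Real.sin θ * Real.exp (z * Real.cos θ)) := by
      intro θ; rw [Real.cos_add]; ring
    simp only [hrw]
    rw [intervalIntegral.integral_sub
        (((by fun_prop : Continuous fun θ : ℝ => Real.cos φ * (Real.cos θ * Real.exp (z * Real.cos θ)))).intervalIntegrable _ _)
        (((by fun_prop : Continuous fun θ : ℝ => Real.sin φ * (Real.sin θ * Real.exp (z * Real.cos θ)))).intervalIntegrable _ _),
      intervalIntegral.integral_const_mul, intervalIntegral.integral_const_mul,
      int_full_one, int_full_sin]
    ring
  have key_sin : ∫ θ in (0:ℝ)..(2 * π), Real.sin θ * Real.exp (z * Real.cos (θ - φ))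
      = Real.sin φ * (2 * π * besselI 1 z) := by
    have hsh := shift_integral (fun ψ => Real.sin (ψ + φ) * Real.exp (z * Real.cos ψ)) hpers φ
    simp only [sub_add_cancel] at hsh
    rw [hsh]
    have hrw : ∀ θ : ℝ, Real.sin (θ + φ) * Real.exp (z * Real.cos θ)
        = Real.cos φ * (Real.sin θ * Real.exp (z * Real.cos θ))
          + Real.sin φ * (Real.cos θ * Real.exp (z * Real.cos θ)) := by
      intro θ; rw [Real.sin_add]; ring
    simp only [hrw]
    rw [intervalIntegral.integral_add
        (((by fun_prop : Continuous fun θ : ℝ => Real.cos φ * (Real.sin θ * Real.exp (z * Real.cos θ)))).intervalIntegrable _ _)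
        (((by fun_prop : Continuous fun θ : ℝ => Real.sin φ * (Real.cos θ * Real.exp (z * Real.cos θ)))).intervalIntegrable _ _),
      intervalIntegral.integral_const_mul, intervalIntegral.integral_const_mul,
      int_full_one, int_full_sin]
    ring
  -- measure bookkeeping
  have htoReal : ((ENNReal.ofReal (2 * π))⁻¹).toReal = (2 * π)⁻¹ := by
    rw [ENNReal.toReal_inv, ENNReal.toReal_ofReal (by positivity)]
  have h2π : (0:ℝ) ≤ 2 * π := by positivity
  -- the denominator
  have hden : (∫ v, Real.exp (-‖v - u‖ ^ 2 / (2 * σ ^ 2)) ∂circleUniform) = C * besselI 0 z := by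
    rw [circleUniform_eq,
      integral_map cmap_cont.measurable.aemeasurable
        ((by fun_prop : Continuous fun v : EuclideanSpace ℝ (Fin 2) =>
          Real.exp (-‖v - u‖ ^ 2 / (2 * σ ^ 2))).aestronglyMeasurable),
      integral_smul_measure, htoReal]
    simp only [hptw]
    rw [MeasureTheory.integral_Icc_eq_integral_Ioc, ← intervalIntegral.integral_of_le h2π,
      intervalIntegral.integral_const_mul, key_den]
    rw [smul_eq_mul]
    field_simp
  -- the numerator
  set E0 : EuclideanSpace ℝ (Fin 2) := EuclideanSpace.single 0 (1:ℝ) with hE0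
  set E1 : EuclideanSpace ℝ (Fin 2) := EuclideanSpace.single 1 (1:ℝ) with hE1
  have hdecomp : ∀ θ : ℝ, cmap θ = Real.cos θ • E0 + Real.sin θ • E1 := by
    intro θ
    ext i
    fin_cases i <;>
      simp [cmap_apply0, cmap_apply1, hE0, hE1, EuclideanSpace.single_apply,
        PiLp.add_apply, PiLp.smul_apply]
  have hudecomp : u = u 0 • E0 + u 1 • E1 := by
    ext i
    fin_cases i <;>
      simp [hE0, hE1, EuclideanSpace.single_apply, PiLp.add_apply, PiLp.smul_apply]
  have hnum : (∫ v, Real.exp (-‖v - u‖ ^ 2 / (2 * σ ^ 2)) • v ∂circleUniform)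
      = (C * besselI 1 z) • (Real.cos φ • E0 + Real.sin φ • E1) := by
    rw [circleUniform_eq,
      integral_map cmap_cont.measurable.aemeasurable
        ((by fun_prop : Continuous fun v : EuclideanSpace ℝ (Fin 2) =>
          Real.exp (-‖v - u‖ ^ 2 / (2 * σ ^ 2)) • v).aestronglyMeasurable),
      integral_smul_measure, htoReal]
    have hrw : ∀ θ : ℝ, Real.exp (-‖cmap θ - u‖ ^ 2 / (2 * σ ^ 2)) • cmap θ
        = (C * (Real.cos θ * Real.exp (z * Real.cos (θ - φ)))) • E0
          + (C * (Real.sin θ * Real.exp (z * Real.cos (θ - φ)))) • E1 := by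
      intro θ
      rw [hptw, hdecomp, smul_add, smul_smul, smul_smul]
      ring_nf
    simp only [hrw]
    rw [MeasureTheory.integral_add
        (((by fun_prop : Continuous fun θ : ℝ =>
          (C * (Real.cos θ * Real.exp (z * Real.cos (θ - φ)))) • E0)).integrableOn_Icc)
        (((by fun_prop : Continuous fun θ : ℝ =>
          (C * (Real.sin θ * Real.exp (z * Real.cos (θ - φ)))) • E1)).integrableOn_Icc),
      integral_smul_const, integral_smul_const]
    rw [MeasureTheory.integral_Icc_eq_integral_Ioc, ← intervalIntegral.integral_of_le h2π,
      MeasureTheory.integral_Icc_eq_integral_Ioc, ← intervalIntegral.integral_of_le h2π,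
      intervalIntegral.integral_const_mul, intervalIntegral.integral_const_mul,
      key_cos, key_sin]
    rw [smul_add, smul_smul, smul_smul, smul_add, smul_smul, smul_smul]
    congr 1 <;> · congr 1; field_simp
  -- assemble
  have hI0 : besselI 0 z ≠ 0 := (besselI0_pos z).ne'
  have hbase : Real.cos φ • E0 + Real.sin φ • E1 = r⁻¹ • u := by
    rw [hudecomp, smul_add, smul_smul, smul_smul, ← hcos, ← hsin]
    congr 1 <;> · congr 1; field_simp
  have hrne : r ≠ 0 := hrpos.ne'
  have hCne : C ≠ 0 := hCpos.ne'
  clear_value r z C φ w E0 E1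
  rw [Dopt, hden, hnum, hbase]
  simp only [smul_smul]
  congr 1
  field_simp
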